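/- Let E be a real Banach space and let δ : ℝ → ℝ be a modulus of uniform convexity for E. Then for every ε ∈ (0,2], every pair of invertible linear isometries S, T of E with TS = ST, and every ξ ∈ E with ‖ξ − Sξ‖ ≥ ε·‖ξ‖, one has (1/2)·‖(ξ + Tξ)/2‖ + (1/2)·‖(ξ + T(Sξ))/2‖ ≤ max{ 1 − δ(δ(ε))/2, 1 − δ(ε)/4 } · ‖ξ‖. -/
import Mathlib


/-- `δ : ℝ → ℝ` is a *modulus of uniform convexity* for `E`: it maps `(0,2]` into `(0,1]` and
for every `ε ∈ (0,2]` and all unit vectors `ξ, η` with `‖ξ - η‖ ≥ ε` one has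
`‖(ξ + η)/2‖ ≤ 1 - δ ε`. -/
def IsUCModulus (E : Type*) [NormedAddCommGroup E] [NormedSpace ℝ E] (δ : ℝ → ℝ) : Prop :=
  (∀ ε : ℝ, 0 < ε → ε ≤ 2 → 0 < δ ε ∧ δ ε ≤ 1) ∧
    ∀ ε : ℝ, 0 < ε → ε ≤ 2 → ∀ ξ η : E, ‖ξ‖ = 1 → ‖η‖ = 1 → ε ≤ ‖ξ - η‖ →
      ‖(2⁻¹ : ℝ) • (ξ + η)‖ ≤ 1 - δ ε

/-- If `δ` is a modulus of uniform convexity for `E`, then for every `ε ∈ (0,2]`, every pair of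
commuting invertible linear isometries `S, T` of `E` and every `ξ` with `‖ξ - Sξ‖ ≥ ε‖ξ‖`,
`(1/2)‖(ξ + Tξ)/2‖ + (1/2)‖(ξ + TSξ)/2‖ ≤ max {1 - δ(δ(ε))/2, 1 - δ(ε)/4} · ‖ξ‖`. -/
theorem uniformly_convex_averaging_inequality
    (E : Type*) [NormedAddCommGroup E] [NormedSpace ℝ E]
    (δ : ℝ → ℝ) (hδ : IsUCModulus E δ)
    (ε : ℝ) (hε0 : 0 < ε) (hε2 : ε ≤ 2)
    (S T : E ≃ₗᵢ[ℝ] E) (hcomm : ∀ ξ : E, T (S ξ) = S (T ξ))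
    (ξ : E) (hξ : ε * ‖ξ‖ ≤ ‖ξ - S ξ‖) :
    2⁻¹ * ‖(2⁻¹ : ℝ) • (ξ + T ξ)‖ + 2⁻¹ * ‖(2⁻¹ : ℝ) • (ξ + T (S ξ))‖ ≤
      max (1 - δ (δ ε) / 2) (1 - δ ε / 4) * ‖ξ‖ := by
  obtain ⟨hδ1, hδ2⟩ := hδ
  obtain ⟨hδε0, hδε1⟩ := hδ1 ε hε0 hε2
  by_cases hξ0 : ξ = 0
  · subst hξ0
    simp
  have hn : (0 : ℝ) < ‖ξ‖ := norm_pos_iff.mpr hξ0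
  -- key lemma: uniform convexity for vectors of norm ‖ξ‖
  have key : ∀ (η : E), ‖η‖ = ‖ξ‖ → ∀ ε' : ℝ, 0 < ε' → ε' ≤ 2 →
      ε' * ‖ξ‖ ≤ ‖ξ - η‖ → ‖(2⁻¹ : ℝ) • (ξ + η)‖ ≤ (1 - δ ε') * ‖ξ‖ := by
    intro η hη ε' h0 h2 hle
    have h1 : ‖(‖ξ‖⁻¹ : ℝ) • ξ‖ = 1 := by
      rw [norm_smul, Real.norm_eq_abs, abs_inv, abs_of_pos hn, inv_mul_cancel₀ hn.ne']
    have h1' : ‖(‖ξ‖⁻¹ : ℝ) • η‖ = 1 := by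
      rw [norm_smul, Real.norm_eq_abs, abs_inv, abs_of_pos hn, hη, inv_mul_cancel₀ hn.ne']
    have hsub : ε' ≤ ‖(‖ξ‖⁻¹ : ℝ) • ξ - (‖ξ‖⁻¹ : ℝ) • η‖ := by
      rw [← smul_sub, norm_smul, Real.norm_eq_abs, abs_inv, abs_of_pos hn,
        inv_mul_eq_div, le_div_iff₀ hn]
      exact hle
    have h := hδ2 ε' h0 h2 _ _ h1 h1' hsub
    have heq : (2⁻¹ : ℝ) • ((‖ξ‖⁻¹ : ℝ) • ξ + (‖ξ‖⁻¹ : ℝ) • η) =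
        (‖ξ‖⁻¹ : ℝ) • ((2⁻¹ : ℝ) • (ξ + η)) := by
      rw [← smul_add]; rw [smul_comm]
    rw [heq, norm_smul, Real.norm_eq_abs, abs_inv, abs_of_pos hn] at h
    calc ‖(2⁻¹ : ℝ) • (ξ + η)‖ = ‖ξ‖ * (‖ξ‖⁻¹ * ‖(2⁻¹ : ℝ) • (ξ + η)‖) := by
          field_simp
      _ ≤ ‖ξ‖ * (1 - δ ε') := by
          exact mul_le_mul_of_nonneg_left h hn.le
      _ = (1 - δ ε') * ‖ξ‖ := by ring
  have hSn : ‖S ξ‖ = ‖ξ‖ := S.norm_map ξ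
  have hTn : ‖T ξ‖ = ‖ξ‖ := T.norm_map ξ
  have hTSn : ‖T (S ξ)‖ = ‖ξ‖ := by rw [T.norm_map, hSn]
  -- bound on ‖(ξ + Sξ)/2‖
  have hw : ‖(2⁻¹ : ℝ) • (ξ + S ξ)‖ ≤ (1 - δ ε) * ‖ξ‖ := key (S ξ) hSn ε hε0 hε2 hξ
  -- trivial bounds
  have ha1 : ‖(2⁻¹ : ℝ) • (ξ + T ξ)‖ ≤ ‖ξ‖ := by
    rw [norm_smul, Real.norm_eq_abs]
    have := norm_add_le ξ (T ξ)
    rw [hTn] at this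
    calc |(2⁻¹ : ℝ)| * ‖ξ + T ξ‖ ≤ 2⁻¹ * (‖ξ‖ + ‖ξ‖) := by
          rw [abs_of_pos (by norm_num : (0:ℝ) < 2⁻¹)]
          exact mul_le_mul_of_nonneg_left this (by norm_num)
      _ = ‖ξ‖ := by ring
  have hb1 : ‖(2⁻¹ : ℝ) • (ξ + T (S ξ))‖ ≤ ‖ξ‖ := by
    rw [norm_smul, Real.norm_eq_abs]
    have := norm_add_le ξ (T (S ξ))
    rw [hTSn] at this
    calc |(2⁻¹ : ℝ)| * ‖ξ + T (S ξ)‖ ≤ 2⁻¹ * (‖ξ‖ + ‖ξ‖) := by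
          rw [abs_of_pos (by norm_num : (0:ℝ) < 2⁻¹)]
          exact mul_le_mul_of_nonneg_left this (by norm_num)
      _ = ‖ξ‖ := by ring
  by_cases hc : δ ε * ‖ξ‖ ≤ ‖ξ - T ξ‖
  · -- Case A: apply uniform convexity to ξ, Tξ with ε' = δ ε
    obtain ⟨hδδ0, _⟩ := hδ1 (δ ε) hδε0 (by linarith)
    have ha : ‖(2⁻¹ : ℝ) • (ξ + T ξ)‖ ≤ (1 - δ (δ ε)) * ‖ξ‖ :=
      key (T ξ) hTn (δ ε) hδε0 (by linarith) hc
    have : 2⁻¹ * ‖(2⁻¹ : ℝ) • (ξ + T ξ)‖ + 2⁻¹ * ‖(2⁻¹ : ℝ) • (ξ + T (S ξ))‖ ≤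
        (1 - δ (δ ε) / 2) * ‖ξ‖ := by nlinarith
    calc _ ≤ (1 - δ (δ ε) / 2) * ‖ξ‖ := this
      _ ≤ max (1 - δ (δ ε) / 2) (1 - δ ε / 4) * ‖ξ‖ :=
          mul_le_mul_of_nonneg_right (le_max_left _ _) hn.le
  · -- Case B: ‖ξ - Tξ‖ < δ ε * ‖ξ‖
    push_neg at hc
    have hdecomp : (2⁻¹ : ℝ) • (ξ + T (S ξ)) =
        (2⁻¹ : ℝ) • (ξ + S ξ) + (2⁻¹ : ℝ) • (S (T ξ - ξ)) := by
      rw [hcomm, ← smul_add, map_sub]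
      congr 1
      abel
    have hSTξ : ‖S (T ξ - ξ)‖ = ‖ξ - T ξ‖ := by
      rw [S.norm_map, norm_sub_rev]
    have hb : ‖(2⁻¹ : ℝ) • (ξ + T (S ξ))‖ ≤ (1 - δ ε) * ‖ξ‖ + 2⁻¹ * (δ ε * ‖ξ‖) := by
      rw [hdecomp]
      calc ‖(2⁻¹ : ℝ) • (ξ + S ξ) + (2⁻¹ : ℝ) • (S (T ξ - ξ))‖
          ≤ ‖(2⁻¹ : ℝ) • (ξ + S ξ)‖ + ‖(2⁻¹ : ℝ) • (S (T ξ - ξ))‖ := norm_add_le _ _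
        _ ≤ (1 - δ ε) * ‖ξ‖ + 2⁻¹ * (δ ε * ‖ξ‖) := by
            have : ‖(2⁻¹ : ℝ) • (S (T ξ - ξ))‖ = 2⁻¹ * ‖ξ - T ξ‖ := by
              rw [norm_smul, Real.norm_eq_abs, abs_of_pos (by norm_num : (0:ℝ) < 2⁻¹), hSTξ]
            rw [this]
            have h2 : 2⁻¹ * ‖ξ - T ξ‖ ≤ 2⁻¹ * (δ ε * ‖ξ‖) :=
              mul_le_mul_of_nonneg_left hc.le (by norm_num)
            linarith
    have : 2⁻¹ * ‖(2⁻¹ : ℝ) • (ξ + T ξ)‖ + 2⁻¹ * ‖(2⁻¹ : ℝ) • (ξ + T (S ξ))‖ ≤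
        (1 - δ ε / 4) * ‖ξ‖ := by nlinarith
    calc _ ≤ (1 - δ ε / 4) * ‖ξ‖ := this
      _ ≤ max (1 - δ (δ ε) / 2) (1 - δ ε / 4) * ‖ξ‖ :=
          mul_le_mul_of_nonneg_right (le_max_right _ _) hn.le
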